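/- Let ℓ₁ ≠ ℓ₂ be positive reals, b₁ > 0, q₁ ∈ ℝ, and consider B₁ = D(b₁)·S(q₁) (lower triangular) and B₂ = R(t₂)·D(b₂)·S(q₂) with t₂ ∈ (0, π), b₂ > 0, q₂ ∈ ℝ. Then the (1,1) entry of the commutator [B₁·T(w², ℓ₁), B₂·T(w², ℓ₂)] does not vanish identically in w > 0. Specifically, the normalized function D(w) + E(w)/w + F(w)/w², where D(w) = −sin(ℓ₁w)·cos(ℓ₂w) and E, F are bounded, cannot vanish for all w > 0. -/

import Mathlib

/-! The (1,1) entry of the commutator is `K w (-sin (ℓ₁ w) cos (ℓ₂ w)) + O(1)` with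
`K = sin t₂ / (b₁ b₂) > 0`, so both claims reduce to `sin (ℓ₁ w) cos (ℓ₂ w)` not tending to `0`.
This follows from a mean-square estimate: as the frequencies `2ℓ₁, 2ℓ₂, 2(ℓ₁ ± ℓ₂)` are nonzero,
`∫ₛᵗ (sin (ℓ₁ w) cos (ℓ₂ w))² = (t - s) / 4 + O(1)`, which is incompatible with the integrand
being uniformly small on a late window of fixed large length. -/

open Real Matrix

noncomputable def freeMonodromy (E ℓ : ℝ) : Matrix (Fin 2) (Fin 2) ℝ :=
  !![Real.cos (Real.sqrt E * ℓ), Real.sin (Real.sqrt E * ℓ) / Real.sqrt E;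
     -(Real.sqrt E * Real.sin (Real.sqrt E * ℓ)), Real.cos (Real.sqrt E * ℓ)]

noncomputable def rotMat (t : ℝ) : Matrix (Fin 2) (Fin 2) ℝ :=
  !![Real.cos t, -Real.sin t; Real.sin t, Real.cos t]

noncomputable def diagMat (b : ℝ) : Matrix (Fin 2) (Fin 2) ℝ :=
  !![b, 0; 0, 1 / b]

def shearMat (q : ℝ) : Matrix (Fin 2) (Fin 2) ℝ :=
  !![1, 0; q, 1]

open Filter Topology

lemma hasDerivAt_sin_mul_div {c : ℝ} (hc : c ≠ 0) (w : ℝ) :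
    HasDerivAt (fun w => sin (c * w) / c) (cos (c * w)) w := by
  simpa [hc] using ((hasDerivAt_id w).const_mul c).sin.div_const c

lemma sq_sin_mul_cos (x y : ℝ) :
    (sin x * cos y) ^ 2 =
      1 / 4 + cos (2 * y) / 4 - cos (2 * x) / 4 - cos (2 * x - 2 * y) / 8
        - cos (2 * x + 2 * y) / 8 := by
  rw [cos_sub, cos_add, cos_two_mul, cos_two_mul, sin_two_mul, sin_two_mul]
  linear_combination cos y ^ 2 * sin_sq_add_cos_sq x

noncomputable def sinMulCosSqPrimitive (a b w : ℝ) : ℝ :=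
  w / 4 + sin (2 * b * w) / (2 * b) / 4 - sin (2 * a * w) / (2 * a) / 4
    - sin (2 * (a - b) * w) / (2 * (a - b)) / 8 - sin (2 * (a + b) * w) / (2 * (a + b)) / 8

lemma hasDerivAt_sinMulCosSqPrimitive {a b : ℝ} (ha : a ≠ 0) (hb : b ≠ 0) (hab : a - b ≠ 0)
    (hab' : a + b ≠ 0) (w : ℝ) :
    HasDerivAt (sinMulCosSqPrimitive a b) ((sin (a * w) * cos (b * w)) ^ 2) w := by
  have h := (((((hasDerivAt_id w).div_const 4).add
    ((hasDerivAt_sin_mul_div (mul_ne_zero two_ne_zero hb) w).div_const 4)).sub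
    ((hasDerivAt_sin_mul_div (mul_ne_zero two_ne_zero ha) w).div_const 4)).sub
    ((hasDerivAt_sin_mul_div (mul_ne_zero two_ne_zero hab) w).div_const 8)).sub
    ((hasDerivAt_sin_mul_div (mul_ne_zero two_ne_zero hab') w).div_const 8)
  refine h.congr_deriv ?_
  rw [sq_sin_mul_cos]
  ring_nf

lemma abs_sin_div_le (x c : ℝ) : |sin x / c| ≤ |c|⁻¹ := by
  rw [abs_div, div_eq_mul_inv]
  exact mul_le_of_le_one_left (inv_nonneg.2 (abs_nonneg c)) (abs_sin_le_one x)

lemma exists_abs_sinMulCosSqPrimitive_sub_le (a b : ℝ) :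
    ∃ C, ∀ w, |sinMulCosSqPrimitive a b w - w / 4| ≤ C := by
  refine ⟨(|2 * b|⁻¹ + |2 * a|⁻¹) / 4 + (|2 * (a - b)|⁻¹ + |2 * (a + b)|⁻¹) / 8, fun w => ?_⟩
  have h₁ := abs_le.1 (abs_sin_div_le (2 * b * w) (2 * b))
  have h₂ := abs_le.1 (abs_sin_div_le (2 * a * w) (2 * a))
  have h₃ := abs_le.1 (abs_sin_div_le (2 * (a - b) * w) (2 * (a - b)))
  have h₄ := abs_le.1 (abs_sin_div_le (2 * (a + b) * w) (2 * (a + b)))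
  rw [sinMulCosSqPrimitive, abs_le]
  constructor <;> linarith [h₁.1, h₁.2, h₂.1, h₂.2, h₃.1, h₃.2, h₄.1, h₄.2]

lemma exists_integral_sq_sin_mul_cos_ge {a b : ℝ} (ha : a ≠ 0) (hb : b ≠ 0) (hab : a - b ≠ 0)
    (hab' : a + b ≠ 0) :
    ∃ C, ∀ s t, (t - s) / 4 - C ≤ ∫ w in s..t, (sin (a * w) * cos (b * w)) ^ 2 := by
  obtain ⟨C, hC⟩ := exists_abs_sinMulCosSqPrimitive_sub_le a b
  refine ⟨2 * C, fun s t => ?_⟩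
  rw [intervalIntegral.integral_eq_sub_of_hasDerivAt
    (fun w _ => hasDerivAt_sinMulCosSqPrimitive ha hb hab hab' w)
    (by apply Continuous.intervalIntegrable; fun_prop)]
  linarith [(abs_le.1 (hC s)).2, (abs_le.1 (hC t)).1]

lemma not_tendsto_sin_mul_cos {a b : ℝ} (ha : a ≠ 0) (hb : b ≠ 0) (hab : a - b ≠ 0)
    (hab' : a + b ≠ 0) :
    ¬ Tendsto (fun w => sin (a * w) * cos (b * w)) atTop (𝓝 0) := by
  intro h
  obtain ⟨C, hC⟩ := exists_integral_sq_sin_mul_cos_ge ha hb hab hab'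
  -- on a window of length `L` the lower bound `L / 4 - C` is at least `1`
  set L := 4 * |C| + 4
  have hL : 0 < L := by positivity
  have hsq : Tendsto (fun w => (sin (a * w) * cos (b * w)) ^ 2) atTop (𝓝 0) := by
    simpa using h.pow 2
  obtain ⟨T, hT⟩ := eventually_atTop.1 <|
    hsq.eventually (gt_mem_nhds (inv_pos.2 (by positivity : 0 < 2 * L)))
  have hupper : ∫ w in T..T + L, (sin (a * w) * cos (b * w)) ^ 2 ≤ (2 * L)⁻¹ * L := by
    have := intervalIntegral.norm_integral_le_of_norm_le_const (a := T) (b := T + L)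
      (C := (2 * L)⁻¹) (f := fun w => (sin (a * w) * cos (b * w)) ^ 2) fun w hw => by
        rw [Set.uIoc_of_le (by linarith)] at hw
        rw [Real.norm_of_nonneg (sq_nonneg _)]
        exact (hT w hw.1.le).le
    rw [add_sub_cancel_left, abs_of_pos hL] at this
    exact (le_abs_self _).trans this
  have hlower := hC T (T + L)
  have : (2 * L)⁻¹ * L = 1 / 2 := by field_simp
  linarith [le_abs_self C]

lemma tendsto_div_atTop_of_abs_le {E g : ℝ → ℝ} {M : ℝ} (hE : ∀ w, |E w| ≤ M)
    (hg : Tendsto g atTop atTop) : Tendsto (fun w => E w / g w) atTop (𝓝 0) := by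
  simpa only [div_eq_inv_mul, Pi.inv_apply] using
    hg.inv_tendsto_atTop.zero_mul_isBoundedUnder_le (isBoundedUnder_of ⟨M, hE⟩)

lemma abs_mul_add_mul_le {u v : ℝ} (hu : |u| ≤ 1) (hv : |v| ≤ 1) (x y : ℝ) :
    |x * u + y * v| ≤ |x| + |y| := by
  grw [abs_add_le, abs_mul, abs_mul, hu, hv, mul_one, mul_one]

lemma abs_mul_le_one {u v : ℝ} (hu : |u| ≤ 1) (hv : |v| ≤ 1) : |u * v| ≤ 1 := by
  rw [abs_mul]; exact mul_le_one₀ hu (abs_nonneg v) hv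

lemma freeMonodromy_sq {w : ℝ} (hw : 0 ≤ w) (ℓ : ℝ) :
    freeMonodromy (w ^ 2) ℓ =
      !![cos (ℓ * w), sin (ℓ * w) / w; -(w * sin (ℓ * w)), cos (ℓ * w)] := by
  rw [freeMonodromy, sqrt_sq hw, mul_comm w ℓ]

lemma exists_commutator_apply_zero_zero_eq (ℓ₁ ℓ₂ q₁ q₂ t₂ : ℝ) {b₁ b₂ : ℝ} (hb₁ : b₁ ≠ 0)
    (hb₂ : b₂ ≠ 0) :
    ∃ x₁ y₁ x₂ y₂ : ℝ, ∀ w > 0,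
      ((diagMat b₁ * shearMat q₁ * freeMonodromy (w ^ 2) ℓ₁)
          * (rotMat t₂ * diagMat b₂ * shearMat q₂ * freeMonodromy (w ^ 2) ℓ₂)
        - (rotMat t₂ * diagMat b₂ * shearMat q₂ * freeMonodromy (w ^ 2) ℓ₂)
          * (diagMat b₁ * shearMat q₁ * freeMonodromy (w ^ 2) ℓ₁)) 0 0
        = sin t₂ / (b₁ * b₂) * w * (-(sin (ℓ₁ * w) * cos (ℓ₂ * w)))
          + (x₁ * (sin (ℓ₁ * w) * sin (ℓ₂ * w)) + y₁ * (cos (ℓ₁ * w) * cos (ℓ₂ * w)))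
          + (x₂ * (sin (ℓ₁ * w) * cos (ℓ₂ * w)) + y₂ * (sin (ℓ₂ * w) * cos (ℓ₁ * w))) / w := by
  refine ⟨(b₂ * cos t₂ - q₂ / b₂ * sin t₂) / b₁ - b₁ * cos t₂ / b₂, q₁ * sin t₂ / (b₁ * b₂),
    b₁ * (b₂ * sin t₂ + q₂ / b₂ * cos t₂), -((b₂ * cos t₂ - q₂ / b₂ * sin t₂) * q₁ / b₁),
    fun w hw => ?_⟩
  simp only [freeMonodromy_sq hw.le, rotMat, diagMat, shearMat, Matrix.sub_apply,
    Matrix.mul_apply, Fin.sum_univ_two, Matrix.of_apply, Matrix.cons_val', Matrix.cons_val_zero,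
    Matrix.cons_val_one, Matrix.empty_val', Matrix.cons_val_fin_one]
  field_simp
  ring

lemma not_forall_mul_sin_mul_cos_eq {a b K M N : ℝ} {E F : ℝ → ℝ} (ha : a ≠ 0) (hb : b ≠ 0)
    (hab : a - b ≠ 0) (hab' : a + b ≠ 0) (hK : 0 < K) (hE : ∀ w, |E w| ≤ M)
    (hF : ∀ w, |F w| ≤ N) :
    ¬ ∀ w > 0, K * w * (sin (a * w) * cos (b * w)) = E w + F w / w := by
  intro h
  refine not_tendsto_sin_mul_cos ha hb hab hab' ?_
  have hKw : Tendsto (fun w => K * w) atTop atTop := tendsto_id.const_mul_atTop hK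
  have hKw2 : Tendsto (fun w => K * w ^ 2) atTop atTop :=
    (tendsto_pow_atTop two_ne_zero).const_mul_atTop hK
  have hlim := (tendsto_div_atTop_of_abs_le hE hKw).add (tendsto_div_atTop_of_abs_le hF hKw2)
  rw [add_zero] at hlim
  refine hlim.congr' (eventually_gt_atTop 0 |>.mono fun w hw => ?_)
  have hw' := hw.ne'
  have hK' := hK.ne'
  calc E w / (K * w) + F w / (K * w ^ 2) = (E w + F w / w) / (K * w) := by field_simp
    _ = sin (a * w) * cos (b * w) := by rw [← h w hw]; field_simp

theorem mixed_case_commutator_nonvanishing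
    (ℓ₁ ℓ₂ b₁ b₂ q₁ q₂ t₂ : ℝ)
    (h₁ : ℓ₁ > 0) (h₂ : ℓ₂ > 0) (hne : ℓ₁ ≠ ℓ₂)
    (hb₁ : b₁ > 0) (hb₂ : b₂ > 0) (ht₂ : t₂ ∈ Set.Ioo 0 Real.pi) :
    (¬ ∀ w : ℝ, w > 0 →
      ((diagMat b₁ * shearMat q₁ * freeMonodromy (w ^ 2) ℓ₁)
          * (rotMat t₂ * diagMat b₂ * shearMat q₂ * freeMonodromy (w ^ 2) ℓ₂)
        - (rotMat t₂ * diagMat b₂ * shearMat q₂ * freeMonodromy (w ^ 2) ℓ₂)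
          * (diagMat b₁ * shearMat q₁ * freeMonodromy (w ^ 2) ℓ₁)) 0 0 = 0) ∧
    (∀ Efn Ffn : ℝ → ℝ, (∃ M : ℝ, ∀ w : ℝ, |Efn w| ≤ M ∧ |Ffn w| ≤ M) →
      ¬ ∀ w : ℝ, w > 0 →
        -Real.sin (ℓ₁ * w) * Real.cos (ℓ₂ * w) + Efn w / w + Ffn w / w ^ 2 = 0) := by
  have hdiff : ℓ₁ - ℓ₂ ≠ 0 := sub_ne_zero.2 hne
  have hsum : ℓ₁ + ℓ₂ ≠ 0 := by positivity
  constructor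
  · intro hall
    obtain ⟨x₁, y₁, x₂, y₂, hentry⟩ :=
      exists_commutator_apply_zero_zero_eq ℓ₁ ℓ₂ q₁ q₂ t₂ hb₁.ne' hb₂.ne'
    have hK : 0 < sin t₂ / (b₁ * b₂) := by
      have := sin_pos_of_pos_of_lt_pi ht₂.1 ht₂.2
      positivity
    refine not_forall_mul_sin_mul_cos_eq h₁.ne' h₂.ne' hdiff hsum hK
      (fun w => abs_mul_add_mul_le
        (abs_mul_le_one (abs_sin_le_one (ℓ₁ * w)) (abs_sin_le_one (ℓ₂ * w)))
        (abs_mul_le_one (abs_cos_le_one (ℓ₁ * w)) (abs_cos_le_one (ℓ₂ * w))) x₁ y₁)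
      (fun w => abs_mul_add_mul_le
        (abs_mul_le_one (abs_sin_le_one (ℓ₁ * w)) (abs_cos_le_one (ℓ₂ * w)))
        (abs_mul_le_one (abs_sin_le_one (ℓ₂ * w)) (abs_cos_le_one (ℓ₁ * w))) x₂ y₂)
      fun w hw => ?_
    linarith [hentry w hw, hall w hw]
  · rintro Efn Ffn ⟨M, hM⟩ hall
    refine not_forall_mul_sin_mul_cos_eq (K := 1) h₁.ne' h₂.ne' hdiff hsum one_pos
      (fun w => (hM w).1) (fun w => (hM w).2) fun w hw => ?_
    have hw' := hw.ne'
    calc 1 * w * (sin (ℓ₁ * w) * cos (ℓ₂ * w)) = w * (Efn w / w + Ffn w / w ^ 2) := by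
          linear_combination -w * hall w hw
      _ = Efn w + Ffn w / w := by field_simp
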